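/- arXiv:2009.11540 — 2 statements merged into one kernel-verified Lean document; each statement's English description precedes it below -/
import Mathlib

section
/- Let n, p, m be natural numbers, let λ : Fin n → ℂ satisfy Re(λ i) < 0 for all i, and let Φ : Fin n → Matrix (Fin p) (Fin m) ℂ. Let τ > 0 and define Q_τ ∈ Matrix (Fin n) (Fin n) ℂ by Q_τ i j = tr(Φ i · (Φ j)ᴴ) · (exp((λ i + conj(λ j)) · τ) − 1) / (λ i + conj(λ j)). Then for every vector α : Fin n → ℝ, ∫_{t ∈ [0, τ]} ‖∑ i, (1 − α i) • (exp(λ i · t) • Φ i)‖_F² dt = ∑ i, ∑ j, (1 − α i) · (1 − α j) · Q_τ i j, where the double sum on the right is a real number (i.e., the complex double sum equals the coercion of the real-valued integral on the left). -/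
/-!
Since ‖M‖_F² = tr(M Mᴴ) and conj(e^{λt}) = e^{conj λ · t} for real t, the integrand is the
Hermitian form t ↦ ∑ᵢⱼ (1 - αᵢ)(1 - αⱼ) tr(Φᵢ Φⱼᴴ) e^{(λᵢ + conj λⱼ) t}. Each exponent
μ = λᵢ + conj λⱼ has negative real part, so it is nonzero and e^{μt} integrates over [0, τ]
to (e^{μτ} - 1)/μ.
-/

open MeasureTheory Complex Matrix

/-- Squared Frobenius norm of a complex matrix. -/
noncomputable def frobSq {p m : ℕ} (M : Matrix (Fin p) (Fin m) ℂ) : ℝ :=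
  ∑ i, ∑ j, ‖M i j‖ ^ 2

open ComplexConjugate

theorem Matrix.trace_mul_conjTranspose_self_eq_sum_sq_norm {m n : Type*} [Fintype m] [Fintype n]
    (M : Matrix m n ℂ) : (M * Mᴴ).trace = ∑ i, ∑ j, ((‖M i j‖ ^ 2 : ℝ) : ℂ) := by
  simp only [trace, diag, mul_apply, conjTranspose_apply, RCLike.star_def, Complex.mul_conj,
    Complex.sq_norm]

theorem Matrix.trace_sum_smul_mul_conjTranspose_sum_smul {ι m n R : Type*} [Fintype ι]
    [Fintype m] [Fintype n] [CommSemiring R] [StarRing R]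
    (c d : ι → R) (A B : ι → Matrix m n R) :
    ((∑ i, c i • A i) * (∑ j, d j • B j)ᴴ).trace =
      ∑ i, ∑ j, c i * star (d j) * (A i * (B j)ᴴ).trace := by
  simp only [conjTranspose_sum, conjTranspose_smul, Matrix.sum_mul, Matrix.mul_sum, Matrix.smul_mul,
    Matrix.mul_smul, trace_sum, trace_smul, smul_eq_mul, Finset.mul_sum, mul_assoc]
  rw [Finset.sum_comm]
  simp only [mul_left_comm (star _)]

theorem ofReal_frobSq {p m : ℕ} (M : Matrix (Fin p) (Fin m) ℂ) :
    (frobSq M : ℂ) = (M * Mᴴ).trace := by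
  rw [trace_mul_conjTranspose_self_eq_sum_sq_norm, frobSq]
  push_cast
  rfl

theorem add_conj_ne_zero_of_re_neg {z w : ℂ} (hz : z.re < 0) (hw : w.re < 0) :
    z + conj w ≠ 0 := fun h => by
  have := congrArg Complex.re h
  simp only [add_re, conj_re, zero_re] at this
  linarith

theorem conj_exp_mul_ofReal (z : ℂ) (t : ℝ) : conj (exp (z * t)) = exp (conj z * t) := by
  rw [← Complex.exp_conj, map_mul, conj_ofReal]

theorem ofReal_frobSq_sum_smul_exp_smul {ι : Type*} [Fintype ι] {p m : ℕ} (w : ι → ℝ)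
    (lam : ι → ℂ) (Φ : ι → Matrix (Fin p) (Fin m) ℂ) (t : ℝ) :
    (frobSq (∑ i, w i • (exp (lam i * t) • Φ i)) : ℂ) =
      ∑ i, ∑ j, (w i : ℂ) * (w j : ℂ) * (Φ i * (Φ j)ᴴ).trace *
        exp ((lam i + conj (lam j)) * t) := by
  simp only [ofReal_frobSq, ← Complex.coe_smul, smul_smul,
    trace_sum_smul_mul_conjTranspose_sum_smul, RCLike.star_def, map_mul, conj_ofReal,
    conj_exp_mul_ofReal, add_mul, exp_add]
  refine Finset.sum_congr rfl fun i _ => Finset.sum_congr rfl fun j _ => ?_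
  ring

theorem intervalIntegral.integral_sum_mul_exp {ι : Type*} [Fintype ι] (c μ : ι → ℂ)
    (hμ : ∀ i, μ i ≠ 0) (a b : ℝ) :
    ∫ t in a..b, ∑ i, c i * exp (μ i * t) =
      ∑ i, c i * (exp (μ i * b) - exp (μ i * a)) / μ i := by
  rw [intervalIntegral.integral_finsetSum fun i _ =>
    (by fun_prop : Continuous _).intervalIntegrable _ _]
  simp only [intervalIntegral.integral_const_mul, integral_exp_mul_complex (hμ _), mul_div_assoc]

theorem optimal_time_limited_h2_modal_truncation_quadratic_form_general
    (n p m : ℕ) (lam : Fin n → ℂ) (hlam : ∀ i, (lam i).re < 0)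
    (Φ : Fin n → Matrix (Fin p) (Fin m) ℂ) (τ : ℝ)
    (Qτ : Matrix (Fin n) (Fin n) ℂ)
    (hQτ : ∀ i j, Qτ i j = (Φ i * (Φ j)ᴴ).trace *
      (Complex.exp ((lam i + (starRingEnd ℂ) (lam j)) * τ) - 1) /
        (lam i + (starRingEnd ℂ) (lam j)))
    (α : Fin n → ℝ) :
    ((∫ t in (0 : ℝ)..τ,
        frobSq (∑ i, (1 - α i) • (Complex.exp (lam i * (t : ℂ)) • Φ i)) : ℝ) : ℂ) =
      ∑ i, ∑ j, ((1 - α i : ℝ) : ℂ) * ((1 - α j : ℝ) : ℂ) * Qτ i j := by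
  rw [← intervalIntegral.integral_ofReal]
  simp_rw [ofReal_frobSq_sum_smul_exp_smul]
  conv_lhs => enter [1, t]; rw [← Fintype.sum_prod_type']
  rw [intervalIntegral.integral_sum_mul_exp _ _
    (fun ij : Fin n × Fin n => add_conj_ne_zero_of_re_neg (hlam ij.1) (hlam ij.2)),
    Fintype.sum_prod_type]
  simp only [hQτ, ofReal_zero, mul_zero, exp_zero, mul_div_assoc, mul_assoc]

theorem optimal_time_limited_h2_modal_truncation_quadratic_form
    (n p m : ℕ) (lam : Fin n → ℂ) (hlam : ∀ i, (lam i).re < 0)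
    (Φ : Fin n → Matrix (Fin p) (Fin m) ℂ) (τ : ℝ) (hτ : 0 < τ)
    (Qτ : Matrix (Fin n) (Fin n) ℂ)
    (hQτ : ∀ i j, Qτ i j = (Φ i * (Φ j)ᴴ).trace *
      (Complex.exp ((lam i + (starRingEnd ℂ) (lam j)) * τ) - 1) /
        (lam i + (starRingEnd ℂ) (lam j)))
    (α : Fin n → ℝ) :
    ((∫ t in (0 : ℝ)..τ,
        frobSq (∑ i, (1 - α i) • (Complex.exp (lam i * (t : ℂ)) • Φ i)) : ℝ) : ℂ) =
      ∑ i, ∑ j, ((1 - α i : ℝ) : ℂ) * ((1 - α j : ℝ) : ℂ) * Qτ i j :=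
  optimal_time_limited_h2_modal_truncation_quadratic_form_general n p m lam hlam Φ τ Qτ hQτ α
end

section
/- Let E be a finite index set, let λ : E → ℂ satisfy Re(λ i) < 0 for all i, and let Φ : E → Matrix (Fin p) (Fin m) ℂ. Then the H₂-norm of the sum is bounded by the sum of the individual H₂-norms: Real.sqrt((1/(2π)) · ∫_{ν ∈ ℝ} ‖∑_{i ∈ E} (I·ν − λ i)⁻¹ • Φ i‖_F² dν) ≤ ∑_{i ∈ E} ‖Φ i‖_F / Real.sqrt(−2 · Re(λ i)). -/
/-!
The H₂-norm is, up to the factor `1/√(2π)`, the L² norm of the transfer function on the imaginary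
axis, so the bound is Minkowski's inequality in L². Each discarded mode is the first-order system
`ν ↦ (iν - λ)⁻¹ • Φ`, whose squared norm `‖Φ‖² / |iν - λ|²` is a Lorentzian in `ν`; its integral
`π ‖Φ‖² / |Re λ|` gives `‖Φ‖ / √(-2 Re λ)`.
-/

open MeasureTheory Complex Matrix

/-- Frobenius norm of a complex matrix. -/
noncomputable def frobNorm {p m : ℕ} (M : Matrix (Fin p) (Fin m) ℂ) : ℝ :=
  Real.sqrt (frobSq M)

open Real

attribute [local instance] Matrix.frobeniusNormedAddCommGroup Matrix.frobeniusNormedSpace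

theorem frobSq_eq_norm_sq {p m : ℕ} (M : Matrix (Fin p) (Fin m) ℂ) : frobSq M = ‖M‖ ^ 2 := by
  change _ = ‖WithLp.toLp 2 fun i => WithLp.toLp 2 fun j => M i j‖ ^ 2
  simp only [PiLp.norm_sq_eq_of_L2, frobSq]

theorem frobNorm_eq_norm {p m : ℕ} (M : Matrix (Fin p) (Fin m) ℂ) : frobNorm M = ‖M‖ := by
  rw [frobNorm, frobSq_eq_norm_sq, sqrt_sq (norm_nonneg M)]

namespace MeasureTheory

variable {α F : Type*} [MeasurableSpace α] {μ : Measure α} [NormedAddCommGroup F]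

theorem MemLp.sqrt_integral_norm_sq {f : α → F} (hf : MemLp f 2 μ) :
    √(∫ x, ‖f x‖ ^ 2 ∂μ) = (eLpNorm f 2 μ).toReal := by
  rw [hf.eLpNorm_eq_integral_rpow_norm two_ne_zero ENNReal.ofNat_ne_top,
    ENNReal.toReal_ofReal (by positivity), sqrt_eq_rpow]
  norm_num

theorem sqrt_integral_norm_sum_sq_le {ι : Type*} {s : Finset ι} {f : ι → α → F}
    (hf : ∀ i ∈ s, MemLp (f i) 2 μ) :
    √(∫ x, ‖∑ i ∈ s, f i x‖ ^ 2 ∂μ) ≤ ∑ i ∈ s, √(∫ x, ‖f i x‖ ^ 2 ∂μ) := by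
  have hfin : ∀ i ∈ s, eLpNorm (f i) 2 μ ≠ ⊤ := fun i hi => (hf i hi).eLpNorm_ne_top
  rw [(memLp_finsetSum s hf).sqrt_integral_norm_sq,
    Finset.sum_congr rfl fun i hi => (hf i hi).sqrt_integral_norm_sq, ← ENNReal.toReal_sum hfin]
  refine ENNReal.toReal_mono (ENNReal.sum_ne_top.2 hfin) ?_
  simpa only [Finset.sum_fn] using
    eLpNorm_sum_le (fun i hi => (hf i hi).aestronglyMeasurable) one_le_two

end MeasureTheory

theorem integrable_inv_sq_add_sub_sq {a : ℝ} (ha : a ≠ 0) (b : ℝ) :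
    Integrable fun x : ℝ => (a ^ 2 + (x - b) ^ 2)⁻¹ := by
  refine ((integrable_inv_one_add_sq.comp_div ha).const_mul (a ^ 2)⁻¹ |>.comp_sub_right b).congr
    (.of_forall fun x => ?_)
  field_simp

theorem integral_inv_sq_add_sub_sq {a : ℝ} (ha : a ≠ 0) (b : ℝ) :
    ∫ x : ℝ, (a ^ 2 + (x - b) ^ 2)⁻¹ = π / |a| := by
  have hscale : ∀ x : ℝ, (a ^ 2 + x ^ 2)⁻¹ = (a ^ 2)⁻¹ * (1 + (x / a) ^ 2)⁻¹ := fun x => by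
    field_simp
  rw [integral_sub_right_eq_self (fun x => (a ^ 2 + x ^ 2)⁻¹) b]
  simp_rw [hscale]
  rw [integral_const_mul, Measure.integral_comp_div (fun y : ℝ => (1 + y ^ 2)⁻¹) a,
    integral_univ_inv_one_add_sq, smul_eq_mul, ← sq_abs a]
  field_simp

theorem norm_I_mul_sub_sq (ν : ℝ) (z : ℂ) : ‖I * ν - z‖ ^ 2 = z.re ^ 2 + (ν - z.im) ^ 2 := by
  rw [Complex.sq_norm, normSq_apply]
  simp only [sub_re, mul_re, I_re, ofReal_re, zero_mul, I_im, ofReal_im, mul_zero, sub_self,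
    zero_sub, sub_im, mul_im, one_mul, zero_add]
  ring

section

variable {F : Type*} [NormedAddCommGroup F] [NormedSpace ℂ F] {z : ℂ}

theorem norm_inv_I_mul_sub_smul_sq (ν : ℝ) (v : F) :
    ‖(I * ν - z)⁻¹ • v‖ ^ 2 = ‖v‖ ^ 2 * (z.re ^ 2 + (ν - z.im) ^ 2)⁻¹ := by
  rw [norm_smul, norm_inv, mul_pow, inv_pow, norm_I_mul_sub_sq, mul_comm]

theorem memLp_two_inv_I_mul_sub_smul (hz : z.re ≠ 0) (v : F) :
    MemLp (fun ν : ℝ => (I * ν - z)⁻¹ • v) 2 := by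
  refine (memLp_two_iff_integrable_sq_norm (by fun_prop)).2 ?_
  simp_rw [norm_inv_I_mul_sub_smul_sq]
  exact (integrable_inv_sq_add_sub_sq hz z.im).const_mul _

theorem integral_norm_inv_I_mul_sub_smul_sq (hz : z.re ≠ 0) (v : F) :
    ∫ ν : ℝ, ‖(I * ν - z)⁻¹ • v‖ ^ 2 = ‖v‖ ^ 2 * (π / |z.re|) := by
  simp_rw [norm_inv_I_mul_sub_smul_sq]
  rw [integral_const_mul, integral_inv_sq_add_sub_sq hz]

end

section H2Norm

variable {F : Type*} [NormedAddCommGroup F]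

/-- The H₂-norm of a transfer function, given by its values `H ν = H(iν)` on the imaginary axis. -/
noncomputable def h2Norm (H : ℝ → F) : ℝ :=
  √((1 : ℝ) / (2 * π) * ∫ ν : ℝ, ‖H ν‖ ^ 2)

theorem h2Norm_sum_le {ι : Type*} {s : Finset ι} {H : ι → ℝ → F}
    (hH : ∀ i ∈ s, MemLp (H i) 2) :
    h2Norm (fun ν => ∑ i ∈ s, H i ν) ≤ ∑ i ∈ s, h2Norm (H i) := by
  simp only [h2Norm, sqrt_mul' _ (integral_nonneg fun _ => sq_nonneg _), ← Finset.mul_sum]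
  exact mul_le_mul_of_nonneg_left (sqrt_integral_norm_sum_sq_le hH) (sqrt_nonneg _)

theorem h2Norm_inv_I_mul_sub_smul [NormedSpace ℂ F] {z : ℂ} (hz : z.re ≠ 0) (v : F) :
    h2Norm (fun ν : ℝ => (I * ν - z)⁻¹ • v) = ‖v‖ / √(2 * |z.re|) := by
  have hπ : π ≠ 0 := pi_ne_zero
  rw [h2Norm, integral_norm_inv_I_mul_sub_smul_sq hz,
    show 1 / (2 * π) * (‖v‖ ^ 2 * (π / |z.re|)) = ‖v‖ ^ 2 / (2 * |z.re|) by field_simp,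
    sqrt_div' _ (by positivity), sqrt_sq (norm_nonneg v)]

end H2Norm

theorem H2_truncation_error_bound
    (E : Type*) [Fintype E] (p m : ℕ)
    (lam : E → ℂ) (hlam : ∀ i, (lam i).re < 0)
    (Φ : E → Matrix (Fin p) (Fin m) ℂ) :
    Real.sqrt (((1 : ℝ) / (2 * Real.pi)) *
        ∫ ν : ℝ, frobSq (∑ i, (Complex.I * (ν : ℂ) - lam i)⁻¹ • Φ i)) ≤
      ∑ i, frobNorm (Φ i) / Real.sqrt (-2 * (lam i).re) := by
  have hterm : ∀ i, h2Norm (fun ν : ℝ => (I * ν - lam i)⁻¹ • Φ i) =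
      frobNorm (Φ i) / √(-2 * (lam i).re) := fun i => by
    rw [h2Norm_inv_I_mul_sub_smul (hlam i).ne, abs_of_neg (hlam i), frobNorm_eq_norm, mul_neg,
      neg_mul]
  calc _ = h2Norm (fun ν : ℝ => ∑ i, (I * ν - lam i)⁻¹ • Φ i) := by
        simp only [h2Norm, frobSq_eq_norm_sq]
    _ ≤ ∑ i, h2Norm (fun ν : ℝ => (I * ν - lam i)⁻¹ • Φ i) :=
        h2Norm_sum_le fun i _ => memLp_two_inv_I_mul_sub_smul (hlam i).ne (Φ i)
    _ = _ := Finset.sum_congr rfl fun i _ => hterm i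
end
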